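/- arXiv:1301.6149 — 4 statements merged into one kernel-verified Lean document; each statement's English description precedes it below -/
import Mathlib

section
/- Let U and V be Hilbert spaces and B : U × V → ℝ a bounded bilinear form satisfying: (i) |B(u,v)| ≤ C‖u‖‖v‖ for all u,v; (ii) sup_{u≠0} B(u,v)/‖u‖ ≥ α‖v‖ for all v ∈ V with α > 0; (iii) if B(u,v) = 0 for all v ∈ V then u = 0. Then for every bounded linear functional L on V there exists a unique u ∈ U with B(u,v) = L(v) for all v ∈ V, and ‖u‖ ≤ ‖L‖/α. -/
open scoped RealInnerProductSpace

/-!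
Through the Riesz isomorphism, `B` defines an operator `A : V → U` with `⟪A v, u⟫ = B u v`.
The inf-sup condition says exactly that `A` is bounded below by `α`, so `A` is injective with
closed range, and trial-side injectivity says that this range has trivial orthogonal complement.
Hence `A` is an isomorphism with `‖A⁻¹‖ ≤ 1 / α`, and the solution is the Riesz representative
of `L ∘ A⁻¹`.
-/

section

variable {E : Type*} [NormedAddCommGroup E] [NormedSpace ℝ E]

theorem ContinuousLinearMap.iSup_div_norm_le_opNorm (f : E →L[ℝ] ℝ) :
    ⨆ x : {x : E // x ≠ 0}, f x.1 / ‖x.1‖ ≤ ‖f‖ :=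
  Real.iSup_le (fun x => div_le_of_le_mul₀ (norm_nonneg _) (norm_nonneg _)
    ((le_abs_self _).trans (f.le_opNorm x.1))) (norm_nonneg f)

end

section

variable {U V : Type*} [NormedAddCommGroup U] [InnerProductSpace ℝ U] [CompleteSpace U]
  [NormedAddCommGroup V] [NormedSpace ℝ V]

noncomputable def ContinuousLinearMap.flipRiesz (B : U →L[ℝ] V →L[ℝ] ℝ) : V →L[ℝ] U :=
  (InnerProductSpace.toDual ℝ U).symm.toContinuousLinearEquiv.toContinuousLinearMap ∘L B.flip

theorem ContinuousLinearMap.inner_flipRiesz_apply (B : U →L[ℝ] V →L[ℝ] ℝ) (v : V) (u : U) :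
    ⟪B.flipRiesz v, u⟫ = B u v := by
  simp [flipRiesz, InnerProductSpace.toDual_symm_apply]

theorem ContinuousLinearMap.norm_flipRiesz_apply (B : U →L[ℝ] V →L[ℝ] ℝ) (v : V) :
    ‖B.flipRiesz v‖ = ‖B.flip v‖ :=
  (InnerProductSpace.toDual ℝ U).symm.norm_map _

theorem ContinuousLinearMap.orthogonal_range_flipRiesz_eq_bot (B : U →L[ℝ] V →L[ℝ] ℝ)
    (hinj : ∀ u : U, (∀ v : V, B u v = 0) → u = 0) :
    B.flipRiesz.rangeᗮ = ⊥ :=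
  (Submodule.eq_bot_iff _).2 fun u hu => hinj u fun v => by
    rw [← B.inner_flipRiesz_apply]
    exact hu _ (LinearMap.mem_range_self (B.flipRiesz : V →ₗ[ℝ] U) v)

end

section

variable {U V : Type*} [NormedAddCommGroup U] [InnerProductSpace ℝ U]
  [NormedAddCommGroup V] [NormedSpace ℝ V]
  {A : V →L[ℝ] U} {α : ℝ}

theorem ContinuousLinearMap.antilipschitz_of_mul_norm_le (hα : 0 < α)
    (hbelow : ∀ v, α * ‖v‖ ≤ ‖A v‖) : AntilipschitzWith ⟨α⁻¹, by positivity⟩ A :=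
  A.antilipschitz_of_bound fun v => (le_inv_mul_iff₀ hα).2 (hbelow v)

theorem ContinuousLinearMap.range_eq_top_of_mul_norm_le [CompleteSpace V] (hα : 0 < α)
    (hbelow : ∀ v, α * ‖v‖ ≤ ‖A v‖) (horth : A.rangeᗮ = ⊥) :
    A.range = ⊤ := by
  have : CompleteSpace A.range :=
    ((antilipschitz_of_mul_norm_le hα hbelow).isComplete_range
      A.uniformContinuous).completeSpace_coe
  exact Submodule.orthogonal_eq_bot_iff.1 horth

theorem ContinuousLinearMap.exists_inner_eq_of_mul_norm_le [CompleteSpace U] [CompleteSpace V]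
    (hα : 0 < α) (hbelow : ∀ v, α * ‖v‖ ≤ ‖A v‖) (horth : A.rangeᗮ = ⊥)
    (L : V →L[ℝ] ℝ) : ∃ u : U, (∀ v, ⟪A v, u⟫ = L v) ∧ ‖u‖ ≤ ‖L‖ / α := by
  let e : V ≃L[ℝ] U := .ofBijective A
    (LinearMap.ker_eq_bot.2 (antilipschitz_of_mul_norm_le hα hbelow).injective)
    (range_eq_top_of_mul_norm_le hα hbelow horth)
  refine ⟨(InnerProductSpace.toDual ℝ U).symm (L ∘L e.symm.toContinuousLinearMap), fun v => ?_, ?_⟩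
  · rw [real_inner_comm, InnerProductSpace.toDual_symm_apply]
    exact congrArg L (e.symm_apply_apply v)
  · rw [LinearIsometryEquiv.norm_map, div_eq_mul_inv]
    refine ContinuousLinearMap.opNorm_le_bound _ (by positivity) fun w => ?_
    calc ‖L (e.symm w)‖ ≤ ‖L‖ * ‖e.symm w‖ := L.le_opNorm _
      _ ≤ ‖L‖ * (α⁻¹ * ‖e (e.symm w)‖) :=
        mul_le_mul_of_nonneg_left ((le_inv_mul_iff₀ hα).2 (hbelow _)) (norm_nonneg _)
      _ = ‖L‖ * α⁻¹ * ‖w‖ := by rw [e.apply_symm_apply, mul_assoc]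

end

theorem babuska_lax_milgram_general
    {U V : Type*} [NormedAddCommGroup U] [InnerProductSpace ℝ U] [CompleteSpace U]
    [NormedAddCommGroup V] [InnerProductSpace ℝ V] [CompleteSpace V]
    (B : U →L[ℝ] V →L[ℝ] ℝ) (α : ℝ) (hα : 0 < α)
    (hinfsup : ∀ v : V, α * ‖v‖ ≤ ⨆ u : {u : U // u ≠ 0}, B u.1 v / ‖u.1‖)
    (hinj : ∀ u : U, (∀ v : V, B u v = 0) → u = 0) :
    ∀ L : V →L[ℝ] ℝ, ∃ u : U, (∀ v : V, B u v = L v) ∧ ‖u‖ ≤ ‖L‖ / α ∧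
      ∀ u' : U, (∀ v : V, B u' v = L v) → u' = u := by
  intro L
  have hbelow : ∀ v, α * ‖v‖ ≤ ‖B.flipRiesz v‖ := fun v => by
    rw [B.norm_flipRiesz_apply]
    exact (hinfsup v).trans (B.flip v).iSup_div_norm_le_opNorm
  obtain ⟨u, hu, hnorm⟩ := B.flipRiesz.exists_inner_eq_of_mul_norm_le hα hbelow
    (B.orthogonal_range_flipRiesz_eq_bot hinj) L
  have hsol : ∀ v, B u v = L v := fun v => by rw [← B.inner_flipRiesz_apply, hu]
  refine ⟨u, hsol, hnorm, fun u' hu' => sub_eq_zero.1 (hinj _ fun v => ?_)⟩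
  rw [map_sub, sub_apply, hu', hsol, sub_self]

/-- Babuška–Lax–Milgram theorem: continuity, test-side inf-sup and trial-side
injectivity imply well-posedness with stability constant `1/α`. -/
theorem babuska_lax_milgram
    {U V : Type*} [NormedAddCommGroup U] [InnerProductSpace ℝ U] [CompleteSpace U]
    [NormedAddCommGroup V] [InnerProductSpace ℝ V] [CompleteSpace V]
    (B : U →L[ℝ] V →L[ℝ] ℝ) (C α : ℝ) (hα : 0 < α)
    (hcont : ∀ u v, |B u v| ≤ C * ‖u‖ * ‖v‖)
    (hinfsup : ∀ v : V, α * ‖v‖ ≤ ⨆ u : {u : U // u ≠ 0}, B u.1 v / ‖u.1‖)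
    (hinj : ∀ u : U, (∀ v : V, B u v = 0) → u = 0) :
    ∀ L : V →L[ℝ] ℝ, ∃ u : U, (∀ v : V, B u v = L v) ∧ ‖u‖ ≤ ‖L‖ / α ∧
      ∀ u' : U, (∀ v : V, B u' v = L v) → u' = u :=
  babuska_lax_milgram_general B α hα hinfsup hinj
end

section
/- Let K be the unit square and p ≥ 0. If z ∈ Q_{p+2}(K) vanishes at the four vertices of K, satisfies ∫_K z v = 0 for all v ∈ Q_p(K), and ∫_{∂K} z γ = 0 for all γ that are polynomials of degree ≤ p on each edge of K, then z = 0. -/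
/-!
On an edge, `z` restricts to a univariate polynomial of degree `≤ p + 2` vanishing at both
endpoints, i.e. to `t (t - 1) u` with `deg u ≤ p`; testing the edge moments with `γ = u` gives
`∫₀¹ t (1 - t) u² = 0`, so `u = 0`. Hence `z` vanishes on `∂K` and factors as
`x (x - 1) y (y - 1) φ` with `φ ∈ Q_p`; testing the interior moments with `φ` gives
`∫_K x (1 - x) y (1 - y) φ² = 0`, so `φ = 0`.
-/

open MvPolynomial intervalIntegral

/-- The tensor-product polynomial space `Q_r` of degree at most `r` in each of
the two variables separately. -/
noncomputable def Qsp (r : ℕ) : Submodule ℝ (MvPolynomial (Fin 2) ℝ) :=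
  Submodule.span ℝ {q | ∃ i ≤ r, ∃ j ≤ r, q = X 0 ^ i * X 1 ^ j}

open Set

namespace MvPolynomial

variable {σ R : Type*} [CommRing R]

theorem eval_bind₁_update [DecidableEq σ] (x : σ → R) (i : σ) (c : R)
    (z : MvPolynomial σ R) :
    eval x (bind₁ (Function.update X i (C c)) z) = eval (Function.update x i c) z := by
  rw [eval, eval₂Hom_bind₁, eval]
  congr 2
  funext j
  rcases eq_or_ne j i with rfl | hji <;> simp [*]

theorem X_sub_C_dvd_sub_bind₁_update [DecidableEq σ] (i : σ) (c : R) (z : MvPolynomial σ R) :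
    X i - C c ∣ z - bind₁ (Function.update X i (C c)) z := by
  induction z using MvPolynomial.induction_on with
  | C a => simp
  | add f g hf hg => simpa only [map_add, add_sub_add_comm] using dvd_add hf hg
  | mul_X f j hf =>
    have hj : X i - C c ∣ X j - Function.update X i (C c) j := by
      rcases eq_or_ne j i with rfl | hji <;> simp [*]
    rw [map_mul, bind₁_X_right]
    convert dvd_add (dvd_mul_of_dvd_left hf (X j)) (dvd_mul_of_dvd_right hj
      (bind₁ (Function.update X i (C c)) f)) using 1
    ring

theorem exists_natDegree_le_degreeOf_eval_cons {n : ℕ}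
    (z : MvPolynomial (Fin (n + 1)) R) (x : Fin n → R) :
    ∃ q : Polynomial R, q.natDegree ≤ degreeOf 0 z ∧
      ∀ t, q.eval t = eval (Fin.cons t x) z :=
  ⟨(finSuccEquiv R n z).map (eval x),
    Polynomial.natDegree_map_le.trans (natDegree_finSuccEquiv z).le,
    fun t => (eval_eq_eval_mv_eval' x t z).symm⟩

variable [IsDomain R]

theorem X_sub_C_dvd_of_eval_update_eq_zero [DecidableEq σ] {i : σ} {c : R}
    {z : MvPolynomial σ R} (s : σ → Set R) (hs : ∀ j, (s j).Infinite)
    (h : ∀ x ∈ univ.pi s, eval (Function.update x i c) z = 0) : X i - C c ∣ z := by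
  have hsubst : bind₁ (Function.update X i (C c)) z = 0 :=
    funext_set s hs fun x hx => by simpa [eval_bind₁_update] using h x hx
  simpa [hsubst] using X_sub_C_dvd_sub_bind₁_update i c z

theorem X_mul_X_sub_one_dvd_of_eval_update_eq_zero [DecidableEq σ] {i : σ}
    {z : MvPolynomial σ R} (s : σ → Set R) (hs : ∀ j, (s j).Infinite)
    (h0 : ∀ x ∈ univ.pi s, eval (Function.update x i 0) z = 0)
    (h1 : ∀ x ∈ univ.pi s, eval (Function.update x i 1) z = 0) :
    X i * (X i - 1) ∣ z := by
  have hcop : IsCoprime (X i - C 0 : MvPolynomial σ R) (X i - C 1) := ⟨1, -1, by simp⟩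
  simpa using hcop.mul_dvd (X_sub_C_dvd_of_eval_update_eq_zero s hs h0)
    (X_sub_C_dvd_of_eval_update_eq_zero s hs h1)

theorem degreeOf_le_degreeOf_mul_left {q : MvPolynomial σ R} (hq : q ≠ 0) (i : σ)
    (p : MvPolynomial σ R) : degreeOf i p ≤ degreeOf i (q * p) := by
  rcases eq_or_ne p 0 with rfl | hp
  · simp
  · rw [degreeOf_mul_eq hq hp]; omega

theorem degreeOf_X_sub_one_self (i : σ) : degreeOf i (X i - 1 : MvPolynomial σ R) = 1 := by
  rw [sub_eq_add_neg, ← C_1, ← C_neg, degreeOf_add_eq_of_degreeOf_lt] <;> simp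

theorem degreeOf_X_mul_X_sub_one_mul {w : MvPolynomial σ R} (hw : w ≠ 0) (i : σ) :
    degreeOf i (X i * (X i - 1) * w) = degreeOf i w + 2 := by
  have hX1 : (X i - 1 : MvPolynomial σ R) ≠ 0 :=
    ne_zero_of_degreeOf_ne_zero (by rw [degreeOf_X_sub_one_self]; norm_num)
  rw [degreeOf_mul_eq (mul_ne_zero (X_ne_zero i) hX1) hw, degreeOf_mul_eq (X_ne_zero i) hX1,
    degreeOf_X_self, degreeOf_X_sub_one_self]
  omega

end MvPolynomial

theorem eqOn_zero_of_integral_eq_zero_of_nonneg {f : ℝ → ℝ} {a b : ℝ} (hab : a < b)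
    (hf : ContinuousOn f (Icc a b)) (hf0 : ∀ x ∈ Icc a b, 0 ≤ f x)
    (hI : ∫ x in a..b, f x = 0) : EqOn f 0 (Icc a b) := by
  intro c hc
  by_contra hfc
  have hpos : ∫ _ in a..b, (0 : ℝ) < ∫ x in a..b, f x :=
    integral_lt_integral_of_continuousOn_of_le_of_exists_lt hab continuousOn_const hf
      (fun x hx => hf0 x (Ioc_subset_Icc_self hx)) ⟨c, hc, (hf0 c hc).lt_of_ne' hfc⟩
  simp [hI] at hpos

theorem eq_zero_of_integral_integral_eq_zero_of_nonneg {F : ℝ → ℝ → ℝ} {a b c d : ℝ}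
    (hab : a < b) (hcd : c < d) (hF : Continuous (Function.uncurry F))
    (hF0 : ∀ x ∈ Icc a b, ∀ y ∈ Icc c d, 0 ≤ F x y)
    (hI : ∫ x in a..b, ∫ y in c..d, F x y = 0) :
    ∀ x ∈ Icc a b, ∀ y ∈ Icc c d, F x y = 0 := by
  have hslice : EqOn (fun x => ∫ y in c..d, F x y) 0 (Icc a b) :=
    eqOn_zero_of_integral_eq_zero_of_nonneg hab
      (continuous_parametric_intervalIntegral_of_continuous' hF c d).continuousOn
      (fun x hx => integral_nonneg hcd.le (hF0 x hx)) hI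
  intro x hx
  exact eqOn_zero_of_integral_eq_zero_of_nonneg hcd (hF.uncurry_left x).continuousOn
    (hF0 x hx) (hslice hx)

namespace Polynomial

theorem eq_zero_of_eval_zero_one_of_integral_mul_eq_zero {p : ℕ} {q : ℝ[X]}
    (hq : q.natDegree ≤ p + 2) (h0 : q.eval 0 = 0) (h1 : q.eval 1 = 0)
    (horth : ∀ γ : ℝ[X], γ.natDegree ≤ p →
      ∫ t in (0 : ℝ)..1, q.eval t * γ.eval t = 0) :
    q = 0 := by
  have hcop : IsCoprime (X - C 0 : ℝ[X]) (X - C 1) := ⟨1, -1, by simp⟩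
  obtain ⟨u, rfl⟩ := hcop.mul_dvd (dvd_iff_isRoot.2 h0) (dvd_iff_isRoot.2 h1)
  rcases eq_or_ne u 0 with rfl | hu
  · simp
  have hu_deg : u.natDegree ≤ p := by
    rw [natDegree_mul (mul_ne_zero (X_sub_C_ne_zero 0) (X_sub_C_ne_zero 1)) hu,
      natDegree_mul (X_sub_C_ne_zero 0) (X_sub_C_ne_zero 1), natDegree_X_sub_C,
      natDegree_X_sub_C] at hq
    omega
  -- `-q u = t (1 - t) u²` is nonnegative on `[0, 1]`
  have hweight : EqOn (fun t => t * (1 - t) * u.eval t ^ 2) 0 (Icc 0 1) := by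
    refine eqOn_zero_of_integral_eq_zero_of_nonneg zero_lt_one (by fun_prop)
      (fun t ht => mul_nonneg (mul_nonneg ht.1 (sub_nonneg.2 ht.2)) (sq_nonneg _)) ?_
    have := horth u hu_deg
    simp only [eval_mul, eval_sub, eval_X, eval_C] at this
    rw [← neg_eq_zero, ← intervalIntegral.integral_neg] at this
    convert this using 2
    funext t
    ring
  refine absurd (eq_zero_of_infinite_isRoot u ((Ioo_infinite zero_lt_one).mono fun t ht => ?_)) hu
  have := hweight (Ioo_subset_Icc_self ht)
  have ht' : t * (1 - t) ≠ 0 := (mul_pos ht.1 (sub_pos.2 ht.2)).ne'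
  simpa [ht'] using this

end Polynomial

theorem mem_Qsp_iff {r : ℕ} {q : MvPolynomial (Fin 2) ℝ} :
    q ∈ Qsp r ↔ ∀ i, degreeOf i q ≤ r := by
  constructor
  · intro hq
    induction hq using Submodule.span_induction with
    | mem q hq =>
      obtain ⟨i, hi, j, hj, rfl⟩ := hq
      intro k
      refine (degreeOf_mul_le k _ _).trans ?_
      fin_cases k <;> simpa [degreeOf_X_pow_of_ne]
    | zero => simp
    | add f g _ _ hf hg => exact fun k => (degreeOf_add_le k f g).trans (max_le (hf k) (hg k))
    | smul c f _ hf =>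
      exact fun k => (smul_eq_C_mul f c ▸ degreeOf_C_mul_le f k c).trans (hf k)
  · intro hq
    rw [← support_sum_monomial_coeff q]
    refine Submodule.sum_mem _ fun m hm => ?_
    have hmono : monomial m (coeff m q) = coeff m q • (X 0 ^ m 0 * X 1 ^ m 1) := by
      rw [smul_eq_C_mul, monomial_eq, Finsupp.prod_pow, Fin.prod_univ_two]
    rw [hmono]
    exact Submodule.smul_mem _ _ (Submodule.subset_span
      ⟨m 0, (le_degreeOf_of_mem_support 0 hm).trans (hq 0), m 1,
        (le_degreeOf_of_mem_support 1 hm).trans (hq 1), rfl⟩)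

theorem eval_rename_swap (z : MvPolynomial (Fin 2) ℝ) (a b : ℝ) :
    eval ![a, b] (rename (Equiv.swap 0 1) z) = eval ![b, a] z := by
  rw [eval_rename]
  congr 2
  funext i
  fin_cases i <;> rfl

theorem degreeOf_zero_rename_swap (z : MvPolynomial (Fin 2) ℝ) :
    degreeOf 0 (rename (Equiv.swap 0 1) z) = degreeOf 1 z := by
  simpa using degreeOf_rename_of_injective (Equiv.swap (0 : Fin 2) 1).injective 1 (p := z)

theorem eval_eq_zero_of_horizontal_edge_moments {p : ℕ} {z : MvPolynomial (Fin 2) ℝ}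
    (hz : degreeOf 0 z ≤ p + 2) {a : ℝ} (h0 : eval ![0, a] z = 0) (h1 : eval ![1, a] z = 0)
    (horth : ∀ γ : Polynomial ℝ, γ.natDegree ≤ p →
      ∫ t in (0 : ℝ)..1, eval ![t, a] z * γ.eval t = 0)
    (t : ℝ) : eval ![t, a] z = 0 := by
  obtain ⟨q, hq, hqz⟩ := exists_natDegree_le_degreeOf_eval_cons z ![a]
  replace hqz : ∀ t, q.eval t = eval ![t, a] z := hqz
  have hq0 : q = 0 := Polynomial.eq_zero_of_eval_zero_one_of_integral_mul_eq_zero (hq.trans hz)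
    ((hqz 0).trans h0) ((hqz 1).trans h1) fun γ hγ => by simpa only [hqz] using horth γ hγ
  rw [← hqz, hq0, Polynomial.eval_zero]

theorem eval_eq_zero_of_vertical_edge_moments {p : ℕ} {z : MvPolynomial (Fin 2) ℝ}
    (hz : degreeOf 1 z ≤ p + 2) {a : ℝ} (h0 : eval ![a, 0] z = 0) (h1 : eval ![a, 1] z = 0)
    (horth : ∀ γ : Polynomial ℝ, γ.natDegree ≤ p →
      ∫ t in (0 : ℝ)..1, eval ![a, t] z * γ.eval t = 0)
    (t : ℝ) : eval ![a, t] z = 0 := by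
  rw [← eval_rename_swap] at h0 h1 ⊢
  refine eval_eq_zero_of_horizontal_edge_moments (degreeOf_zero_rename_swap z ▸ hz) h0 h1
    (fun γ hγ => ?_) t
  simpa only [eval_rename_swap] using horth γ hγ

noncomputable def squareBubble : MvPolynomial (Fin 2) ℝ := X 0 * (X 0 - 1) * (X 1 * (X 1 - 1))

theorem exists_eq_squareBubble_mul {z : MvPolynomial (Fin 2) ℝ}
    (hleft : ∀ t, eval ![0, t] z = 0) (hright : ∀ t, eval ![1, t] z = 0)
    (hbot : ∀ t, eval ![t, 0] z = 0) (htop : ∀ t, eval ![t, 1] z = 0) :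
    ∃ φ, z = squareBubble * φ := by
  have update_zero (x : Fin 2 → ℝ) (c : ℝ) : Function.update x 0 c = ![c, x 1] := by
    funext i; fin_cases i <;> simp
  have update_one (x : Fin 2 → ℝ) (c : ℝ) : Function.update x 1 c = ![x 0, c] := by
    funext i; fin_cases i <;> simp
  obtain ⟨w, rfl⟩ := X_mul_X_sub_one_dvd_of_eval_update_eq_zero (i := 0) (fun _ => univ)
    (fun _ => infinite_univ) (fun x _ => update_zero x 0 ▸ hleft _)
    (fun x _ => update_zero x 1 ▸ hright _)
  -- `x (x - 1)` can only be cancelled off the vertical edges, hence the open box below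
  have hcancel (x : Fin 2 → ℝ) (hx : x ∈ univ.pi fun _ => Ioo (0 : ℝ) 1) (c : ℝ)
      (hc : eval ![x 0, c] (X 0 * (X 0 - 1) * w) = 0) : eval (Function.update x 1 c) w = 0 := by
    have hx0 : x 0 * (x 0 - 1) ≠ 0 :=
      mul_ne_zero (hx 0 trivial).1.ne' (sub_ne_zero.2 (hx 0 trivial).2.ne)
    simpa [update_one, hx0] using hc
  obtain ⟨φ, rfl⟩ := X_mul_X_sub_one_dvd_of_eval_update_eq_zero (i := 1)
    (fun _ => Ioo (0 : ℝ) 1) (fun _ => Ioo_infinite zero_lt_one)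
    (fun x hx => hcancel x hx 0 (hbot _)) (fun x hx => hcancel x hx 1 (htop _))
  exact ⟨φ, by rw [squareBubble]; ring⟩

theorem mem_Qsp_of_squareBubble_mul_mem {p : ℕ} {φ : MvPolynomial (Fin 2) ℝ}
    (h : squareBubble * φ ∈ Qsp (p + 2)) : φ ∈ Qsp p := by
  rcases eq_or_ne φ 0 with rfl | hφ
  · exact zero_mem _
  have hbubble (i : Fin 2) : (X i * (X i - 1) : MvPolynomial (Fin 2) ℝ) ≠ 0 :=
    mul_ne_zero (X_ne_zero i) (sub_ne_zero.2 fun h => by simpa using congrArg (eval 0) h)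
  have hdeg (i j : Fin 2) (hz : degreeOf i (X i * (X i - 1) * (X j * (X j - 1) * φ)) ≤ p + 2) :
      degreeOf i φ ≤ p := by
    rw [degreeOf_X_mul_X_sub_one_mul (mul_ne_zero (hbubble j) hφ)] at hz
    have := degreeOf_le_degreeOf_mul_left (hbubble j) i φ
    omega
  rw [mem_Qsp_iff, squareBubble] at h
  rw [mem_Qsp_iff]
  intro i
  fin_cases i
  · exact hdeg 0 1 (by simpa only [mul_assoc] using h 0)
  · exact hdeg 1 0 (by convert h 1 using 2; ring)

theorem eq_zero_of_integral_squareBubble_mul_eq_zero {φ : MvPolynomial (Fin 2) ℝ}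
    (h : ∫ x in (0 : ℝ)..1, ∫ y in (0 : ℝ)..1,
      eval ![x, y] (squareBubble * φ) * eval ![x, y] φ = 0) :
    φ = 0 := by
  have hsq (x y : ℝ) : eval ![x, y] (squareBubble * φ) * eval ![x, y] φ
      = x * (x - 1) * (y * (y - 1)) * eval ![x, y] φ ^ 2 := by
    simp only [squareBubble, map_mul, map_sub, map_one, eval_X, Matrix.cons_val_zero,
      Matrix.cons_val_one]
    ring
  simp only [hsq] at h
  have hcont : Continuous fun q : ℝ × ℝ => eval ![q.1, q.2] φ :=
    (continuous_eval φ).comp (by fun_prop)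
  have hzero := eq_zero_of_integral_integral_eq_zero_of_nonneg zero_lt_one zero_lt_one
    (by fun_prop) (fun x hx y hy => mul_nonneg (mul_nonneg_of_nonpos_of_nonpos
      (mul_nonpos_of_nonneg_of_nonpos hx.1 (by linarith [hx.2]))
      (mul_nonpos_of_nonneg_of_nonpos hy.1 (by linarith [hy.2]))) (sq_nonneg _)) h
  refine funext_set (fun _ => Ioo (0 : ℝ) 1) (fun _ => Ioo_infinite zero_lt_one) fun x hx => ?_
  have hx0 := hx 0 trivial
  have hx1 := hx 1 trivial
  have := hzero (x 0) (Ioo_subset_Icc_self hx0) (x 1) (Ioo_subset_Icc_self hx1)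
  have hx_eq : ![x 0, x 1] = x := by funext i; fin_cases i <;> rfl
  simpa [hx_eq, hx0.1.ne', hx1.1.ne', sub_ne_zero.2 hx0.2.ne, sub_ne_zero.2 hx1.2.ne] using this

/-- Uniqueness for the projector `R_K^0`: a polynomial in `Q_{p+2}` on the unit
square vanishing at the four vertices, `L²`-orthogonal to `Q_p` in the
interior, and orthogonal on each edge to all polynomials of degree `≤ p`,
must vanish. -/
theorem vertex_bubble_unisolvence (p : ℕ) (z : MvPolynomial (Fin 2) ℝ)
    (hzQ : z ∈ Qsp (p + 2))
    (hvert : ∀ v : Fin 2 → Fin 2, eval (fun i => ((v i : ℕ) : ℝ)) z = 0)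
    (hint : ∀ w ∈ Qsp p,
      (∫ x in (0:ℝ)..1, ∫ y in (0:ℝ)..1, eval ![x, y] z * eval ![x, y] w) = 0)
    (hbd : ∀ γ : Polynomial ℝ, γ.natDegree ≤ p →
      (∫ t in (0:ℝ)..1, eval ![t, 0] z * γ.eval t) = 0 ∧
      (∫ t in (0:ℝ)..1, eval ![t, 1] z * γ.eval t) = 0 ∧
      (∫ t in (0:ℝ)..1, eval ![0, t] z * γ.eval t) = 0 ∧
      (∫ t in (0:ℝ)..1, eval ![1, t] z * γ.eval t) = 0) :
    z = 0 := by
  have hv (a b : Fin 2) : eval ![(a : ℝ), (b : ℝ)] z = 0 := by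
    convert hvert ![a, b] using 3
    funext i; fin_cases i <;> rfl
  have hdeg := mem_Qsp_iff.1 hzQ
  have hbot := eval_eq_zero_of_horizontal_edge_moments (hdeg 0) (by simpa using hv 0 0)
    (by simpa using hv 1 0) fun γ hγ => (hbd γ hγ).1
  have htop := eval_eq_zero_of_horizontal_edge_moments (hdeg 0) (by simpa using hv 0 1)
    (by simpa using hv 1 1) fun γ hγ => (hbd γ hγ).2.1
  have hleft := eval_eq_zero_of_vertical_edge_moments (hdeg 1) (by simpa using hv 0 0)
    (by simpa using hv 0 1) fun γ hγ => (hbd γ hγ).2.2.1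
  have hright := eval_eq_zero_of_vertical_edge_moments (hdeg 1) (by simpa using hv 1 0)
    (by simpa using hv 1 1) fun γ hγ => (hbd γ hγ).2.2.2
  obtain ⟨φ, rfl⟩ := exists_eq_squareBubble_mul hleft hright hbot htop
  rw [eq_zero_of_integral_squareBubble_mul_eq_zero
    (hint φ (mem_Qsp_of_squareBubble_mul_mem hzQ)), mul_zero]
end

section
/- Let U, V be Hilbert spaces, U_h ⊆ U and V_h ⊆ V closed subspaces, and B : U × V → ℝ a bounded bilinear form with |B(u,v)| ≤ C‖u‖‖v‖ satisfying sup_{v∈V, v≠0} B(u,v)/‖v‖ ≥ α‖u‖ for all u ∈ U. Suppose there exists a bounded linear projector Π : V → V_h with ‖Πv‖ ≤ c‖v‖ for all v ∈ V and B(w_h, v − Πv) = 0 for all w_h ∈ U_h, v ∈ V. Then sup_{v_h ∈ V_h, v_h ≠ 0} B(u_h, v_h)/‖v_h‖ ≥ (α/c)‖u_h‖ for all u_h ∈ U_h. -/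
/-!
The orthogonality `B(u_h, v - Πv) = 0` says that the functional `B u_h` does not see the
difference between `v` and `Πv`, so `B(u_h, v) = B(u_h, Πv) ≤ S ‖Πv‖ ≤ c S ‖v‖`, where `S` is
the discrete supremum. Hence the continuous supremum, which is at least `α ‖u_h‖`, is at most `c S`.
-/

namespace ContinuousLinearMap

variable {E : Type*} [NormedAddCommGroup E] [NormedSpace ℝ E] (f : E →L[ℝ] ℝ)

theorem bddAbove_range_div_norm (p : E → Prop) :
    BddAbove (Set.range fun v : {v : E // p v} => f v.1 / ‖v.1‖) := by
  refine ⟨‖f‖, ?_⟩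
  rintro _ ⟨v, rfl⟩
  exact div_le_of_le_mul₀ (norm_nonneg _) (norm_nonneg _) ((le_abs_self _).trans (f.le_opNorm v))

theorem apply_le_iSup_div_norm_mul_norm (W : Submodule ℝ E) {w : E} (hw : w ∈ W) :
    f w ≤ (⨆ v : {v : E // v ∈ W ∧ v ≠ 0}, f v.1 / ‖v.1‖) * ‖w‖ := by
  rcases eq_or_ne w 0 with rfl | hw0
  · simp
  · rw [← div_le_iff₀ (norm_pos_iff.mpr hw0)]
    exact le_ciSup (f.bddAbove_range_div_norm _) ⟨w, hw, hw0⟩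

theorem iSup_div_norm_nonneg (W : Submodule ℝ E) :
    0 ≤ ⨆ v : {v : E // v ∈ W ∧ v ≠ 0}, f v.1 / ‖v.1‖ := by
  by_cases hW : ∃ w ∈ W, w ≠ 0
  · obtain ⟨w, hw, hw0⟩ := hW
    have h := f.apply_le_iSup_div_norm_mul_norm W hw
    have hneg := f.apply_le_iSup_div_norm_mul_norm W (W.neg_mem hw)
    rw [map_neg, norm_neg] at hneg
    nlinarith [norm_pos_iff.mpr hw0]
  · have : IsEmpty {v : E // v ∈ W ∧ v ≠ 0} := ⟨fun v => hW ⟨v.1, v.2⟩⟩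
    exact (Real.iSup_of_isEmpty _).ge

theorem iSup_div_norm_le {M : ℝ} (hM : 0 ≤ M) (h : ∀ v, f v ≤ M * ‖v‖) :
    ⨆ v : {v : E // v ≠ 0}, f v.1 / ‖v.1‖ ≤ M :=
  Real.iSup_le (fun v => (div_le_iff₀ (norm_pos_iff.mpr v.2)).mpr (h v)) hM

theorem iSup_div_norm_le_mul_iSup_of_comp_eq (W : Submodule ℝ E) (P : E → E) {c : ℝ}
    (hc : 0 ≤ c) (hPW : ∀ v, P v ∈ W) (hP : ∀ v, ‖P v‖ ≤ c * ‖v‖) (hfP : ∀ v, f (P v) = f v) :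
    ⨆ v : {v : E // v ≠ 0}, f v.1 / ‖v.1‖ ≤
      c * ⨆ v : {v : E // v ∈ W ∧ v ≠ 0}, f v.1 / ‖v.1‖ := by
  have hS := f.iSup_div_norm_nonneg W
  refine f.iSup_div_norm_le (mul_nonneg hc hS) fun v => ?_
  calc f v = f (P v) := (hfP v).symm
    _ ≤ (⨆ v : {v : E // v ∈ W ∧ v ≠ 0}, f v.1 / ‖v.1‖) * ‖P v‖ :=
        f.apply_le_iSup_div_norm_mul_norm W (hPW v)
    _ ≤ (⨆ v : {v : E // v ∈ W ∧ v ≠ 0}, f v.1 / ‖v.1‖) * (c * ‖v‖) :=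
        mul_le_mul_of_nonneg_left (hP v) hS
    _ = c * (⨆ v : {v : E // v ∈ W ∧ v ≠ 0}, f v.1 / ‖v.1‖) * ‖v‖ := by ring

end ContinuousLinearMap

theorem fortin_criterion_general
    {U V : Type*} [NormedAddCommGroup U] [InnerProductSpace ℝ U]
    [NormedAddCommGroup V] [InnerProductSpace ℝ V]
    (Uh : Submodule ℝ U) (Vh : Submodule ℝ V)
    (B : U →L[ℝ] V →L[ℝ] ℝ) (α c : ℝ) (hc : 0 < c)
    (hinfsup : ∀ u : U, α * ‖u‖ ≤ ⨆ v : {v : V // v ≠ 0}, B u v.1 / ‖v.1‖)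
    (Pr : V →L[ℝ] V) (hrange : ∀ v : V, Pr v ∈ Vh)
    (hbound : ∀ v : V, ‖Pr v‖ ≤ c * ‖v‖)
    (horth : ∀ wh ∈ Uh, ∀ v : V, B wh (v - Pr v) = 0) :
    ∀ uh ∈ Uh, (α / c) * ‖uh‖ ≤
      ⨆ vh : {vh : V // vh ∈ Vh ∧ vh ≠ 0}, B uh vh.1 / ‖vh.1‖ := by
  intro uh huh
  have hPr : ∀ v, B uh (Pr v) = B uh v := fun v => by
    have := horth uh huh v
    rw [map_sub, sub_eq_zero] at this
    exact this.symm
  have hsup := (B uh).iSup_div_norm_le_mul_iSup_of_comp_eq Vh Pr hc.le hrange hbound hPr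
  rw [div_mul_eq_mul_div, div_le_iff₀ hc, mul_comm _ c]
  exact (hinfsup uh).trans hsup

/-- Fortin's criterion: a bounded projector `Π : V → V_h` preserving the
bilinear form against discrete trial functions transfers the continuous
trial-side inf-sup condition to the discrete level, with constant `α/c`. -/
theorem fortin_criterion
    {U V : Type*} [NormedAddCommGroup U] [InnerProductSpace ℝ U] [CompleteSpace U]
    [NormedAddCommGroup V] [InnerProductSpace ℝ V] [CompleteSpace V]
    (Uh : Submodule ℝ U) (Vh : Submodule ℝ V)
    (hUh : IsClosed (Uh : Set U)) (hVh : IsClosed (Vh : Set V))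
    (B : U →L[ℝ] V →L[ℝ] ℝ) (C α c : ℝ) (hα : 0 < α) (hc : 0 < c)
    (hcont : ∀ u v, |B u v| ≤ C * ‖u‖ * ‖v‖)
    (hinfsup : ∀ u : U, α * ‖u‖ ≤ ⨆ v : {v : V // v ≠ 0}, B u v.1 / ‖v.1‖)
    (Pr : V →L[ℝ] V) (hrange : ∀ v : V, Pr v ∈ Vh)
    (hproj : ∀ v ∈ Vh, Pr v = v)
    (hbound : ∀ v : V, ‖Pr v‖ ≤ c * ‖v‖)
    (horth : ∀ wh ∈ Uh, ∀ v : V, B wh (v - Pr v) = 0) :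
    ∀ uh ∈ Uh, (α / c) * ‖uh‖ ≤
      ⨆ vh : {vh : V // vh ∈ Vh ∧ vh ≠ 0}, B uh vh.1 / ‖vh.1‖ :=
  fortin_criterion_general Uh Vh B α c hc hinfsup Pr hrange hbound horth
end

section
/- Under the hypotheses of Fortin's criterion (continuous inf-sup with constant α, continuity constant C, Fortin projector Π : V → V_h with norm ≤ c and B(w_h, v − Πv) = 0 for all w_h ∈ U_h), if u ∈ U satisfies B(u,v) = L(v) for all v ∈ V and u_h ∈ U_h satisfies B(u_h, v_h) = L(v_h) for all v_h ∈ V_h, then ‖u − u_h‖ ≤ (1 + Cc/α) inf_{w_h ∈ U_h} ‖u − w_h‖. -/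
/-!
The Fortin projector transfers the continuous inf-sup condition to `U_h × V_h` with constant
`α / c`: testing `w_h ∈ U_h` against `v` is the same as testing it against `Π v ∈ V_h`, and
`‖Π v‖ ≤ c ‖v‖`. By Galerkin orthogonality, `B (w_h - u_h, v_h) = B (w_h - u, v_h)` for every
`v_h ∈ V_h`, so discrete stability bounds `‖w_h - u_h‖` by `(C c / α) ‖u - w_h‖`; the triangle
inequality through `w_h` and an infimum over `w_h` finish the proof.
-/

section InfSup

variable {U V : Type*} [NormedAddCommGroup V]

theorem iSup_div_norm_le {f : V → ℝ} {K : ℝ} (hK : 0 ≤ K) (hf : ∀ v, f v ≤ K * ‖v‖) :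
    ⨆ v : {v : V // v ≠ 0}, f v.1 / ‖v.1‖ ≤ K :=
  Real.iSup_le (fun v => (div_le_iff₀ (norm_pos_iff.mpr v.2)).mpr (hf v.1)) hK

theorem nontrivial_of_iSup_div_norm_pos {f : V → ℝ}
    (hpos : 0 < ⨆ v : {v : V // v ≠ 0}, f v.1 / ‖v.1‖) : Nontrivial V := by
  by_contra htriv
  rw [not_nontrivial_iff_subsingleton] at htriv
  have : IsEmpty {v : V // v ≠ 0} := ⟨fun v => v.2 (Subsingleton.elim _ _)⟩
  rw [Real.iSup_of_isEmpty] at hpos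
  exact hpos.false

variable [NormedAddCommGroup U] [NormedSpace ℝ U] [NormedSpace ℝ V]

/-- By the inf-sup condition a nonzero `u` forces `V` to be nontrivial, so the continuity bound
is tested on a pair of nonzero vectors. -/
theorem continuity_const_nonneg_of_infSup {B : U →L[ℝ] V →L[ℝ] ℝ} {C α : ℝ} {u : U}
    (hα : 0 < α) (hu : u ≠ 0) (hcont : ∀ u v, |B u v| ≤ C * ‖u‖ * ‖v‖)
    (hinfsup : α * ‖u‖ ≤ ⨆ v : {v : V // v ≠ 0}, B u v.1 / ‖v.1‖) : 0 ≤ C := by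
  have hunorm : 0 < ‖u‖ := norm_pos_iff.mpr hu
  have := nontrivial_of_iSup_div_norm_pos ((mul_pos hα hunorm).trans_le hinfsup)
  obtain ⟨v, hv⟩ := exists_ne (0 : V)
  have hprod : 0 < ‖u‖ * ‖v‖ := mul_pos hunorm (norm_pos_iff.mpr hv)
  have hbound := (abs_nonneg _).trans (hcont u v)
  rw [mul_assoc] at hbound
  exact nonneg_of_mul_nonneg_left hbound hprod

theorem infSup_of_fortin {B : U →L[ℝ] V →L[ℝ] ℝ} {Vh : Submodule ℝ V} {Pr : V →L[ℝ] V}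
    {α c K : ℝ} {w : U} (hc : 0 ≤ c) (hK : 0 ≤ K)
    (hinfsup : α * ‖w‖ ≤ ⨆ v : {v : V // v ≠ 0}, B w v.1 / ‖v.1‖)
    (hrange : ∀ v : V, Pr v ∈ Vh) (hbound : ∀ v : V, ‖Pr v‖ ≤ c * ‖v‖)
    (horth : ∀ v : V, B w (v - Pr v) = 0) (hw : ∀ vh ∈ Vh, B w vh ≤ K * ‖vh‖) :
    α * ‖w‖ ≤ c * K := by
  refine hinfsup.trans (iSup_div_norm_le (mul_nonneg hc hK) fun v => ?_)
  have htest : B w v = B w (Pr v) := by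
    rw [← sub_eq_zero, ← map_sub]
    exact horth v
  calc B w v = B w (Pr v) := htest
    _ ≤ K * ‖Pr v‖ := hw _ (hrange v)
    _ ≤ K * (c * ‖v‖) := mul_le_mul_of_nonneg_left (hbound v) hK
    _ = c * K * ‖v‖ := by ring

end InfSup

theorem galerkin_orthogonality {U V : Type*} [SeminormedAddCommGroup U] [NormedSpace ℝ U]
    [SeminormedAddCommGroup V] [NormedSpace ℝ V] {B : U →L[ℝ] V →L[ℝ] ℝ} {L : V →L[ℝ] ℝ}
    {Vh : Submodule ℝ V} {u uh : U} (hu : ∀ v : V, B u v = L v)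
    (hdiscrete : ∀ vh ∈ Vh, B uh vh = L vh) {vh : V} (hvh : vh ∈ Vh) :
    B (u - uh) vh = 0 := by
  rw [map_sub, sub_apply, hu, hdiscrete vh hvh, sub_self]

theorem iInf_norm_sub_eq_zero_of_mem {U : Type*} [NormedAddCommGroup U] [NormedSpace ℝ U]
    {Uh : Submodule ℝ U} {u : U} (hu : u ∈ Uh) : ⨅ wh : Uh, ‖u - (wh : U)‖ = 0 := by
  simpa [Metric.infDist_eq_iInf, dist_eq_norm] using
    Metric.infDist_zero_of_mem (s := (Uh : Set U)) hu

theorem petrov_galerkin_quasi_optimality_general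
    {U V : Type*} [NormedAddCommGroup U] [InnerProductSpace ℝ U]
    [NormedAddCommGroup V] [InnerProductSpace ℝ V]
    (Uh : Submodule ℝ U) (Vh : Submodule ℝ V)
    (B : U →L[ℝ] V →L[ℝ] ℝ) (C α c : ℝ) (hα : 0 < α) (hc : 0 < c)
    (hcont : ∀ u v, |B u v| ≤ C * ‖u‖ * ‖v‖)
    (hinfsup : ∀ u : U, α * ‖u‖ ≤ ⨆ v : {v : V // v ≠ 0}, B u v.1 / ‖v.1‖)
    (Pr : V →L[ℝ] V) (hrange : ∀ v : V, Pr v ∈ Vh)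
    (hbound : ∀ v : V, ‖Pr v‖ ≤ c * ‖v‖)
    (horth : ∀ wh ∈ Uh, ∀ v : V, B wh (v - Pr v) = 0)
    (L : V →L[ℝ] ℝ) (u : U) (uh : U) (huh : uh ∈ Uh)
    (hu : ∀ v : V, B u v = L v)
    (hdiscrete : ∀ vh ∈ Vh, B uh vh = L vh) :
    ‖u - uh‖ ≤ (1 + C * c / α) * ⨅ wh : Uh, ‖u - (wh : U)‖ := by
  rcases eq_or_ne u uh with rfl | hne
  · simp [iInf_norm_sub_eq_zero_of_mem huh]
  have hC : 0 ≤ C :=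
    continuity_const_nonneg_of_infSup hα (sub_ne_zero.mpr hne) hcont (hinfsup _)
  rw [Real.mul_iInf_of_nonneg (by positivity)]
  refine le_ciInf fun ⟨wh, hwh⟩ => ?_
  have hstable : α * ‖wh - uh‖ ≤ c * (C * ‖u - wh‖) := by
    refine infSup_of_fortin hc.le (by positivity) (hinfsup _) hrange hbound
      (horth _ (Uh.sub_mem hwh huh)) fun vh hvh => ?_
    have hsplit : wh - uh = (wh - u) + (u - uh) := (sub_add_sub_cancel _ _ _).symm
    rw [hsplit, map_add, add_apply,
      galerkin_orthogonality hu hdiscrete hvh, add_zero, norm_sub_rev]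
    exact (le_abs_self _).trans (hcont _ _)
  have hdiscrete_err : ‖wh - uh‖ ≤ C * c / α * ‖u - wh‖ := by
    rw [div_mul_eq_mul_div, le_div_iff₀ hα]
    linarith
  calc ‖u - uh‖ ≤ ‖u - wh‖ + ‖wh - uh‖ := norm_sub_le_norm_sub_add_norm_sub _ _ _
    _ ≤ (1 + C * c / α) * ‖u - wh‖ := by linarith

/-- Quasi-optimality of the Petrov–Galerkin approximation under Fortin's
criterion: `‖u − u_h‖ ≤ (1 + Cc/α) inf_{w_h ∈ U_h} ‖u − w_h‖`. -/
theorem petrov_galerkin_quasi_optimality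
    {U V : Type*} [NormedAddCommGroup U] [InnerProductSpace ℝ U] [CompleteSpace U]
    [NormedAddCommGroup V] [InnerProductSpace ℝ V] [CompleteSpace V]
    (Uh : Submodule ℝ U) (Vh : Submodule ℝ V)
    (hUh : IsClosed (Uh : Set U)) (hVh : IsClosed (Vh : Set V))
    (B : U →L[ℝ] V →L[ℝ] ℝ) (C α c : ℝ) (hα : 0 < α) (hc : 0 < c)
    (hcont : ∀ u v, |B u v| ≤ C * ‖u‖ * ‖v‖)
    (hinfsup : ∀ u : U, α * ‖u‖ ≤ ⨆ v : {v : V // v ≠ 0}, B u v.1 / ‖v.1‖)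
    (Pr : V →L[ℝ] V) (hrange : ∀ v : V, Pr v ∈ Vh)
    (hproj : ∀ v ∈ Vh, Pr v = v)
    (hbound : ∀ v : V, ‖Pr v‖ ≤ c * ‖v‖)
    (horth : ∀ wh ∈ Uh, ∀ v : V, B wh (v - Pr v) = 0)
    (L : V →L[ℝ] ℝ) (u : U) (uh : U) (huh : uh ∈ Uh)
    (hu : ∀ v : V, B u v = L v)
    (hdiscrete : ∀ vh ∈ Vh, B uh vh = L vh) :
    ‖u - uh‖ ≤ (1 + C * c / α) * ⨅ wh : Uh, ‖u - (wh : U)‖ :=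
  petrov_galerkin_quasi_optimality_general Uh Vh B C α c hα hc hcont hinfsup Pr hrange hbound horth
    L u uh huh hu hdiscrete
end
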